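/- arXiv:1109.5256 — 3 statements merged into one kernel-verified Lean document; each statement's English description precedes it below -/
import Mathlib

section
/- Let c : I_q × I_q → ℝ satisfy c(i,i) = 0, c(i,j) > 0 for j ≠ i, and the triangular condition c(i,j) + c(j,k) > c(i,k) for all i, j, k with j ≠ i and j ≠ k. Suppose real numbers v_1,…,v_q satisfy v_i = max_j (w_j − c(i,j)) where w_j are given reals with w_j ≥ v_j for all j. If the maximum for index i is attained at some j ≠ i, i.e. v_i = w_j − c(i,j), then for every l ≠ i, j one has w_l − c(j,l) < w_j, i.e. the maximum defining v_j via max_l (w_l − c(j,l)) cannot be attained at any l ≠ j with value exceeding w_j. -/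
theorem switching_cost_no_immediate_switch (q : ℕ) (c : Fin q → Fin q → ℝ)
    (hcc : ∀ i, c i i = 0)
    (hcpos : ∀ i j, j ≠ i → 0 < c i j)
    (htri : ∀ i j k, j ≠ i → j ≠ k → c i k < c i j + c j k)
    (v w : Fin q → ℝ)
    (hne : (Finset.univ : Finset (Fin q)).Nonempty)
    (hv : ∀ i, v i = Finset.univ.sup' hne (fun j => w j - c i j))
    (hw : ∀ j, v j ≤ w j)
    (i j : Fin q) (hij : j ≠ i) (hatt : v i = w j - c i j) :
    ∀ l, l ≠ i → l ≠ j → w l - c j l < w j := by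
  intro l hli hlj
  have h1 : w l - c i l ≤ v i := by
    rw [hv i]; exact Finset.le_sup' (fun j => w j - c i j) (Finset.mem_univ l)
  have h2 : c i l < c i j + c j l := htri i j l hij (Ne.symm hlj)
  linarith [hatt]
end

section
/- Let b, σ : ℝ^d → ℝ (scalar case d = 1 for simplicity) be Lipschitz with linear growth, h ∈ (0,1], ϑ a real random variable with symmetric distribution and E|ϑ|⁴ < ∞. Set F(x,ϑ) = x + h·b(x) + √h·σ(x)·ϑ. Then there exists a constant K (depending only on the Lipschitz constants, E|ϑ|² and E|ϑ|⁴) such that E[(1 + |F(x,ϑ)|² + |F(y,ϑ)|²)·|F(x,ϑ) − F(y,ϑ)|²] ≤ (1 + K·h)·(1 + |x|² + |y|²)·|x − y|² for all x, y ∈ ℝ. -/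
/-!
Put `u = x + h b(x)`, `v = y + h b(y)`, `p = σ(x)`, `q = σ(y)`, so that `F(x, t) = u + √h p t`.
The integrand is a quartic polynomial in `t`, and since `ϑ` and `-ϑ` have the same law only its
even part survives in expectation. The constant term involves the drift step alone, and
`1 + u² + v² ≤ (1 + O(h))(1 + x² + y²)`, `(u - v)² ≤ (1 + O(h))(x - y)²`. The coefficients of
`t²` and `t⁴` carry the factors `h` and `h²`, and the linear growth and Lipschitz bounds on `σ`
make them `O(h)(1 + x² + y²)(x - y)²`. Integrating against `E ϑ²` and `E ϑ⁴` gives `K`.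
-/

open MeasureTheory

def weightedSqDist (u v : ℝ) : ℝ := (1 + |u| ^ 2 + |v| ^ 2) * |u - v| ^ 2

noncomputable def eulerStep (b σ : ℝ → ℝ) (h x t : ℝ) : ℝ :=
  x + h * b x + Real.sqrt h * σ x * t

theorem add_mul_sq_le {h : ℝ} (h0 : 0 ≤ h) (h1 : h ≤ 1) (z e : ℝ) :
    (z + h * e) ^ 2 ≤ z ^ 2 + h * (z ^ 2 + 2 * e ^ 2) := by
  nlinarith [sq_nonneg (z - e), mul_nonneg (mul_nonneg h0 (sub_nonneg.2 h1)) (sq_nonneg e)]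

namespace LipschitzWith

variable {f : ℝ → ℝ} {L : NNReal} {h : ℝ}

theorem sq_le_mul_one_add_sq (hf : LipschitzWith L f) (z : ℝ) :
    f z ^ 2 ≤ (f 0 ^ 2 + L ^ 2) * (1 + z ^ 2) := by
  have hdist : |f z - f 0| ≤ L * |z| := by
    simpa only [Real.dist_eq, sub_zero] using hf.dist_le_mul z 0
  have hgrowth : |f z| ≤ |f 0| + L * |z| := by
    linarith [abs_sub_abs_le_abs_sub (f z) (f 0)]
  -- Cauchy–Schwarz: `(A + L |z|)² ≤ (A² + L²)(1 + z²)`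
  nlinarith [sq_abs (f z), sq_abs (f 0), sq_abs z, abs_nonneg (f z),
    sq_nonneg (|f 0| * |z| - L)]

theorem sub_sq_le (hf : LipschitzWith L f) (x y : ℝ) :
    (f x - f y) ^ 2 ≤ L ^ 2 * (x - y) ^ 2 := by
  have hdist : |f x - f y| ≤ L * |x - y| := by
    simpa only [Real.dist_eq] using hf.dist_le_mul x y
  rw [← sq_abs, ← sq_abs (x - y), ← mul_pow]
  exact pow_le_pow_left₀ (abs_nonneg _) hdist 2

theorem one_add_sq_add_sq_euler_le (hf : LipschitzWith L f) (h0 : 0 ≤ h) (h1 : h ≤ 1)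
    (x y : ℝ) :
    1 + (x + h * f x) ^ 2 + (y + h * f y) ^ 2
      ≤ (1 + (1 + 4 * (f 0 ^ 2 + L ^ 2)) * h) * (1 + x ^ 2 + y ^ 2) := by
  have hM : 0 ≤ f 0 ^ 2 + (L : ℝ) ^ 2 := by positivity
  nlinarith [add_mul_sq_le h0 h1 x (f x), add_mul_sq_le h0 h1 y (f y),
    hf.sq_le_mul_one_add_sq x, hf.sq_le_mul_one_add_sq y, mul_nonneg h0 hM,
    mul_nonneg (mul_nonneg h0 hM) (sq_nonneg x), mul_nonneg (mul_nonneg h0 hM) (sq_nonneg y)]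

theorem sub_euler_sq_le (hf : LipschitzWith L f) (h0 : 0 ≤ h) (h1 : h ≤ 1) (x y : ℝ) :
    ((x + h * f x) - (y + h * f y)) ^ 2 ≤ (1 + (1 + 2 * L ^ 2) * h) * (x - y) ^ 2 := by
  calc ((x + h * f x) - (y + h * f y)) ^ 2 = ((x - y) + h * (f x - f y)) ^ 2 := by ring
    _ ≤ (x - y) ^ 2 + h * ((x - y) ^ 2 + 2 * (f x - f y) ^ 2) := add_mul_sq_le h0 h1 _ _
    _ ≤ (1 + (1 + 2 * L ^ 2) * h) * (x - y) ^ 2 := by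
      linear_combination (2 * h) * hf.sub_sq_le x y

end LipschitzWith

theorem two_mul_cross_le (u v p q : ℝ) :
    2 * ((u * p + v * q) * ((u - v) * (p - q)))
      ≤ (1 + u ^ 2 + v ^ 2) * (p - q) ^ 2 + (p ^ 2 + q ^ 2) * (u - v) ^ 2 := by
  linear_combination sq_nonneg (p - q) + sq_nonneg (u * (p - q) - p * (u - v))
    + sq_nonneg (v * (p - q) - q * (u - v))

theorem weightedSqDist_add_weightedSqDist_neg_le (u v p q s t : ℝ) :
    weightedSqDist (u + s * p * t) (v + s * q * t)
        + weightedSqDist (u + s * p * -t) (v + s * q * -t)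
      ≤ 2 * ((1 + u ^ 2 + v ^ 2) * (u - v) ^ 2
        + 3 * s ^ 2 * t ^ 2
          * ((p ^ 2 + q ^ 2) * (u - v) ^ 2 + (1 + u ^ 2 + v ^ 2) * (p - q) ^ 2)
        + s ^ 4 * t ^ 4 * ((p ^ 2 + q ^ 2) * (p - q) ^ 2)) := by
  simp only [weightedSqDist, sq_abs]
  linear_combination (4 * (s * t) ^ 2) * two_mul_cross_le u v p q

theorem exists_eulerStep_even_part_le {b σ : ℝ → ℝ} {Lb Lσ : NNReal}
    (hb : LipschitzWith Lb b) (hσ : LipschitzWith Lσ σ) :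
    ∃ K₀ K₂ K₄ : ℝ, 0 ≤ K₀ ∧ 0 ≤ K₂ ∧ 0 ≤ K₄ ∧ ∀ h ∈ Set.Ioc (0 : ℝ) 1, ∀ x y t : ℝ,
      (weightedSqDist (eulerStep b σ h x t) (eulerStep b σ h y t)
          + weightedSqDist (eulerStep b σ h x (-t)) (eulerStep b σ h y (-t))) / 2
        ≤ (1 + K₀ * h) * weightedSqDist x y + K₂ * h * weightedSqDist x y * t ^ 2
          + K₄ * h * weightedSqDist x y * t ^ 4 := by
  set a : ℝ := 1 + 4 * (b 0 ^ 2 + Lb ^ 2)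
  set c : ℝ := 1 + 2 * Lb ^ 2
  set M : ℝ := σ 0 ^ 2 + Lσ ^ 2
  have ha : 0 ≤ a := by positivity
  have hc : 0 ≤ c := by positivity
  have hM : 0 ≤ M := by positivity
  refine ⟨a + c + a * c, 3 * (2 * M * (1 + c) + (1 + a) * Lσ ^ 2), 2 * M * Lσ ^ 2,
    by positivity, by positivity, by positivity, ?_⟩
  rintro h ⟨h0, h1⟩ x y t
  set u := x + h * b x
  set v := y + h * b y
  set Q := 1 + x ^ 2 + y ^ 2
  set D := (x - y) ^ 2
  have hQ : 0 ≤ Q := by positivity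
  have hD : 0 ≤ D := by positivity
  have hh : 0 ≤ h * (1 - h) := mul_nonneg h0.le (sub_nonneg.2 h1)
  have hW := hb.one_add_sq_add_sq_euler_le h0.le h1 x y
  have hΔ := hb.sub_euler_sq_le h0.le h1 x y
  have hP : σ x ^ 2 + σ y ^ 2 ≤ 2 * M * Q := by
    nlinarith [hσ.sq_le_mul_one_add_sq x, hσ.sq_le_mul_one_add_sq y,
      mul_nonneg hM (sq_nonneg x), mul_nonneg hM (sq_nonneg y)]
  have hδ := hσ.sub_sq_le x y
  have hc₀ : (1 + u ^ 2 + v ^ 2) * (u - v) ^ 2 ≤ (1 + (a + c + a * c) * h) * (Q * D) := by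
    linear_combination mul_le_mul hW hΔ (sq_nonneg _) (by positivity) + (a * c * (Q * D)) * hh
  have hc₂ : (σ x ^ 2 + σ y ^ 2) * (u - v) ^ 2 + (1 + u ^ 2 + v ^ 2) * (σ x - σ y) ^ 2
      ≤ (2 * M * (1 + c) + (1 + a) * Lσ ^ 2) * (Q * D) := by
    have hΔ' : (u - v) ^ 2 ≤ (1 + c) * D := by
      linear_combination hΔ + (c * D) * sub_nonneg.2 h1
    have hW' : 1 + u ^ 2 + v ^ 2 ≤ (1 + a) * Q := by
      linear_combination hW + (a * Q) * sub_nonneg.2 h1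
    linear_combination mul_le_mul hP hΔ' (sq_nonneg _) (by positivity)
      + mul_le_mul hW' hδ (sq_nonneg _) (by positivity)
  have hc₄ : h ^ 2 * ((σ x ^ 2 + σ y ^ 2) * (σ x - σ y) ^ 2)
      ≤ h * (2 * M * Lσ ^ 2 * (Q * D)) := by
    linear_combination h ^ 2 * mul_le_mul hP hδ (sq_nonneg _) (by positivity)
      + (2 * M * Lσ ^ 2 * (Q * D)) * hh
  have heven := weightedSqDist_add_weightedSqDist_neg_le u v (σ x) (σ y) (Real.sqrt h) t
  rw [show Real.sqrt h ^ 4 = (Real.sqrt h ^ 2) ^ 2 by ring, Real.sq_sqrt h0.le] at heven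
  have hw : weightedSqDist x y = Q * D := by simp only [weightedSqDist, sq_abs, Q, D]
  rw [hw]
  simp only [eulerStep]
  linear_combination heven / 2 + hc₀ + (3 * h * t ^ 2) * hc₂ + t ^ 4 * hc₄

section Moments

variable {Ω : Type*} {mΩ : MeasurableSpace Ω} {μ : Measure Ω} {ϑ : Ω → ℝ}

theorem integral_comp_le_of_map_eq_map_neg (hϑ : AEMeasurable ϑ μ)
    (hsymm : μ.map ϑ = μ.map (fun ω => -ϑ ω)) {g k : ℝ → ℝ} (hg : Continuous g)
    (hgi : Integrable (fun ω => g (ϑ ω)) μ) (hki : Integrable (fun ω => k (ϑ ω)) μ)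
    (hgk : ∀ t, (g t + g (-t)) / 2 ≤ k t) :
    ∫ ω, g (ϑ ω) ∂μ ≤ ∫ ω, k (ϑ ω) ∂μ := by
  have hneg : ∫ ω, g (-ϑ ω) ∂μ = ∫ ω, g (ϑ ω) ∂μ := by
    rw [← integral_map (φ := fun ω => -ϑ ω) hϑ.neg hg.aestronglyMeasurable, ← hsymm,
      integral_map hϑ hg.aestronglyMeasurable]
  have hgi' : Integrable (fun ω => g (-ϑ ω)) μ := by
    have hmap := (integrable_map_measure hg.aestronglyMeasurable hϑ).2 hgi
    rw [hsymm] at hmap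
    exact
      (integrable_map_measure (f := fun ω => -ϑ ω) hg.aestronglyMeasurable hϑ.neg).1 hmap
  calc ∫ ω, g (ϑ ω) ∂μ = ∫ ω, (g (ϑ ω) + g (-ϑ ω)) / 2 ∂μ := by
        rw [integral_div, integral_add hgi hgi', hneg]; ring
    _ ≤ ∫ ω, k (ϑ ω) ∂μ := integral_mono ((hgi.add hgi').div_const 2) hki fun ω => hgk (ϑ ω)

theorem MeasureTheory.MemLp.sq_of_four {f : Ω → ℝ} (hf : MemLp f 4 μ) :
    MemLp (fun ω => f ω ^ 2) 2 μ := by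
  have : ENNReal.HolderTriple 4 4 2 := ⟨by
    rw [show (4 : ENNReal) = 2 * 2 by norm_num, ENNReal.mul_inv (by simp) (by simp), ← two_mul,
      ← mul_assoc, ENNReal.mul_inv_cancel (by simp) (by simp), one_mul]⟩
  simpa only [sq] using hf.mul' hf

theorem MeasureTheory.MemLp.integrable_pow_four (hϑ : MemLp ϑ 4 μ) :
    Integrable (fun ω => ϑ ω ^ 4) μ := by
  simpa only [← pow_mul] using hϑ.sq_of_four.integrable_sq

theorem MeasureTheory.MemLp.eulerStep [IsFiniteMeasure μ] {p : ENNReal} (hϑ : MemLp ϑ p μ)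
    (b σ : ℝ → ℝ) (h x : ℝ) : MemLp (fun ω => eulerStep b σ h x (ϑ ω)) p μ := by
  unfold _root_.eulerStep
  exact (memLp_const (x + h * b x)).add (hϑ.const_mul (Real.sqrt h * σ x))

theorem integrable_weightedSqDist [IsFiniteMeasure μ] {f g : Ω → ℝ} (hf : MemLp f 4 μ)
    (hg : MemLp g 4 μ) : Integrable (fun ω => weightedSqDist (f ω) (g ω)) μ := by
  have hweight : MemLp (fun ω => 1 + f ω ^ 2 + g ω ^ 2) 2 μ :=
    ((memLp_const (1 : ℝ)).add hf.sq_of_four).add hg.sq_of_four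
  have hdist : MemLp (fun ω => (f ω - g ω) ^ 2) 2 μ := (hf.sub hg).sq_of_four
  simp only [weightedSqDist, sq_abs]
  exact hweight.integrable_mul hdist

theorem integral_const_add_mul_sq_add_mul_pow_four [IsProbabilityMeasure μ]
    (hϑ : MemLp ϑ 4 μ) (A B C : ℝ) :
    Integrable (fun ω => A + B * ϑ ω ^ 2 + C * ϑ ω ^ 4) μ ∧
      ∫ ω, (A + B * ϑ ω ^ 2 + C * ϑ ω ^ 4) ∂μ
        = A + B * ∫ ω, ϑ ω ^ 2 ∂μ + C * ∫ ω, ϑ ω ^ 4 ∂μ := by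
  have i2 := (hϑ.sq_of_four.integrable one_le_two).const_mul B
  have i4 := hϑ.integrable_pow_four.const_mul C
  have i02 : Integrable (fun ω => A + B * ϑ ω ^ 2) μ := (integrable_const A).add i2
  refine ⟨i02.add i4, ?_⟩
  rw [integral_add i02 i4, integral_add (integrable_const A) i2,
    integral_const, integral_const_mul, integral_const_mul]
  simp

end Moments

theorem euler_kernel_symmetric_estimate_general
    {Ω : Type*} {mΩ : MeasurableSpace Ω} (μ : Measure Ω) [IsProbabilityMeasure μ]
    (b σ : ℝ → ℝ) (Lb Lσ : NNReal)
    (hb : LipschitzWith Lb b) (hσ : LipschitzWith Lσ σ)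
    (ϑ : Ω → ℝ)
    (hsymm : Measure.map ϑ μ = Measure.map (fun ω => -ϑ ω) μ)
    (hϑ4 : MemLp ϑ 4 μ) :
    ∃ K : ℝ, 0 ≤ K ∧ ∀ h ∈ Set.Ioc (0 : ℝ) 1, ∀ x y : ℝ,
      (∫ ω, (1 + |x + h * b x + Real.sqrt h * σ x * ϑ ω| ^ 2
              + |y + h * b y + Real.sqrt h * σ y * ϑ ω| ^ 2)
          * |(x + h * b x + Real.sqrt h * σ x * ϑ ω)
              - (y + h * b y + Real.sqrt h * σ y * ϑ ω)| ^ 2 ∂μ)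
        ≤ (1 + K * h) * (1 + |x| ^ 2 + |y| ^ 2) * |x - y| ^ 2 := by
  obtain ⟨K₀, K₂, K₄, hK₀, hK₂, hK₄, heven⟩ := exists_eulerStep_even_part_le hb hσ
  refine ⟨K₀ + K₂ * ∫ ω, ϑ ω ^ 2 ∂μ + K₄ * ∫ ω, ϑ ω ^ 4 ∂μ, by positivity, ?_⟩
  intro h hh x y
  set w := weightedSqDist x y
  obtain ⟨hint, hmoments⟩ := integral_const_add_mul_sq_add_mul_pow_four hϑ4
    ((1 + K₀ * h) * w) (K₂ * h * w) (K₄ * h * w)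
  calc ∫ ω, weightedSqDist (eulerStep b σ h x (ϑ ω)) (eulerStep b σ h y (ϑ ω)) ∂μ
      ≤ ∫ ω, ((1 + K₀ * h) * w + K₂ * h * w * ϑ ω ^ 2 + K₄ * h * w * ϑ ω ^ 4) ∂μ :=
        integral_comp_le_of_map_eq_map_neg
          (g := fun t => weightedSqDist (eulerStep b σ h x t) (eulerStep b σ h y t))
          hϑ4.aemeasurable hsymm (by unfold weightedSqDist eulerStep; fun_prop)
          (integrable_weightedSqDist (hϑ4.eulerStep b σ h x) (hϑ4.eulerStep b σ h y))
          hint (heven h hh x y)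
    _ = (1 + (K₀ + K₂ * ∫ ω, ϑ ω ^ 2 ∂μ + K₄ * ∫ ω, ϑ ω ^ 4 ∂μ) * h)
          * (1 + |x| ^ 2 + |y| ^ 2) * |x - y| ^ 2 := by
        rw [hmoments]; simp only [w, weightedSqDist]; ring

theorem euler_kernel_symmetric_estimate
    {Ω : Type*} {mΩ : MeasurableSpace Ω} (μ : Measure Ω) [IsProbabilityMeasure μ]
    (b σ : ℝ → ℝ) (Lb Lσ : NNReal)
    (hb : LipschitzWith Lb b) (hσ : LipschitzWith Lσ σ)
    (ϑ : Ω → ℝ) (hϑmeas : Measurable ϑ)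
    (hsymm : Measure.map ϑ μ = Measure.map (fun ω => -ϑ ω) μ)
    (hϑ4 : MemLp ϑ 4 μ) :
    ∃ K : ℝ, 0 ≤ K ∧ ∀ h ∈ Set.Ioc (0 : ℝ) 1, ∀ x y : ℝ,
      (∫ ω, (1 + |x + h * b x + Real.sqrt h * σ x * ϑ ω| ^ 2
              + |y + h * b y + Real.sqrt h * σ y * ϑ ω| ^ 2)
          * |(x + h * b x + Real.sqrt h * σ x * ϑ ω)
              - (y + h * b y + Real.sqrt h * σ y * ϑ ω)| ^ 2 ∂μ)
        ≤ (1 + K * h) * (1 + |x| ^ 2 + |y| ^ 2) * |x - y| ^ 2 :=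
  euler_kernel_symmetric_estimate_general (mΩ := mΩ) μ b σ Lb Lσ hb hσ ϑ hsymm hϑ4
end

section
/- Let t_k = k·T/m for k = 1,…,m, d ≥ 1, and suppose the grid sizes are chosen as N_k = ⌈ t_k^{d/(2(d+1))} · N̄ / Σ_{j=1}^m t_j^{d/(2(d+1))} ⌉ with total budget N̄ ≥ m. Then there is a constant K depending only on T and d such that Σ_{k=1}^m √t_k / N_k^{1/d} ≤ K · m / (N̄/m)^{1/d}, i.e. the optimized allocation achieves the rate 1/(h·(N̄·h)^{1/d}) with h = T/m. -/
/-!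
With `α = d / (2(d+1))` and `S = Σ_j t_j^α`, the bound `⌈x⌉₊ ≥ x` makes each term at most
`√t_k / (t_k^α N̄ / S)^{1/d} = t_k^{1/2 - α/d} (S / N̄)^{1/d}`. Bounding `t_k ≤ T` in both factors
(so `S ≤ m T^α`), the powers of `T` recombine to `√T` and the sum is at most `√T · m · (m / N̄)^{1/d}`.
Only `α / d ≤ 1/2` is needed, not the particular value of `α`.
-/

open Finset Real

lemma sqrt_div_ceil_rpow_le {t α p N S : ℝ} (ht : 0 < t) (hN : 0 < N) (hS : 0 < S) (hp : 0 ≤ p) :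
    √t / (⌈t ^ α * N / S⌉₊ : ℝ) ^ p ≤ t ^ (1 / 2 - α * p) * (S / N) ^ p := by
  calc √t / (⌈t ^ α * N / S⌉₊ : ℝ) ^ p
      ≤ √t / (t ^ α * N / S) ^ p := by
        gcongr
        exact Nat.le_ceil _
    _ = t ^ (1 / 2 - α * p) * (S / N) ^ p := by
        rw [mul_div_assoc, mul_rpow (rpow_nonneg ht.le α) (by positivity), ← rpow_mul ht.le,
          ← div_div, sqrt_eq_rpow, ← rpow_sub ht, div_eq_mul_inv, ← inv_rpow (by positivity),
          inv_div]

lemma sum_sqrt_div_ceil_rpow_le {ι : Type*} (s : Finset ι) {t : ι → ℝ} {T α p N : ℝ}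
    (ht : ∀ k ∈ s, 0 < t k) (htT : ∀ k ∈ s, t k ≤ T) (hα : 0 ≤ α) (hp : 0 ≤ p)
    (hαp : α * p ≤ 1 / 2) (hN : 0 < N) :
    ∑ k ∈ s, √(t k) / (⌈t k ^ α * N / ∑ j ∈ s, t j ^ α⌉₊ : ℝ) ^ p
      ≤ √T * #s / (N / #s) ^ p := by
  set S := ∑ j ∈ s, t j ^ α
  have hS : ∀ k ∈ s, 0 < S := fun k hk =>
    sum_pos' (fun j hj => (rpow_pos_of_pos (ht j hj) α).le) ⟨k, hk, rpow_pos_of_pos (ht k hk) α⟩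
  have hST : S ≤ #s * T ^ α := by
    rw [← nsmul_eq_mul, ← sum_const]
    exact sum_le_sum fun k hk => rpow_le_rpow (ht k hk).le (htT k hk) hα
  obtain rfl | ⟨k₀, hk₀⟩ := s.eq_empty_or_nonempty
  · simp
  have hT : 0 < T := (ht k₀ hk₀).trans_le (htT k₀ hk₀)
  have hs : (0 : ℝ) < #s := by exact_mod_cast card_pos.mpr ⟨k₀, hk₀⟩
  have hSN : 0 ≤ S / N := div_nonneg (hS k₀ hk₀).le hN.le
  calc ∑ k ∈ s, √(t k) / (⌈t k ^ α * N / S⌉₊ : ℝ) ^ p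
      ≤ ∑ k ∈ s, T ^ (1 / 2 - α * p) * (S / N) ^ p := by
        refine sum_le_sum fun k hk => (sqrt_div_ceil_rpow_le (ht k hk) hN (hS k hk) hp).trans ?_
        gcongr
        exacts [(ht k hk).le, htT k hk]
    _ = #s * T ^ (1 / 2 - α * p) * (S / N) ^ p := by rw [sum_const, nsmul_eq_mul, mul_assoc]
    _ ≤ #s * T ^ (1 / 2 - α * p) * (#s * T ^ α / N) ^ p := by gcongr
    _ = √T * #s / (N / #s) ^ p := by
        rw [div_rpow (by positivity) hN.le, mul_rpow hs.le (by positivity), ← rpow_mul hT.le,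
          div_rpow hN.le hs.le, sqrt_eq_rpow, ← sub_add_cancel (1 / 2) (α * p), rpow_add hT,
          add_sub_cancel_right]
        field_simp

theorem grid_size_optimization_general (d : ℕ) (T : ℝ) (hT : 0 < T) :
    ∃ K : ℝ, 0 < K ∧ ∀ m Nbar : ℕ, 1 ≤ m → m ≤ Nbar →
      (∑ k ∈ Finset.Icc 1 m,
          Real.sqrt ((k : ℝ) * T / m) /
            ((Nat.ceil ((((k : ℝ) * T / m) ^ ((d : ℝ) / (2 * (d + 1))) * (Nbar : ℝ)) /
              (∑ j ∈ Finset.Icc 1 m, ((j : ℝ) * T / m) ^ ((d : ℝ) / (2 * (d + 1))))) : ℝ)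
              ^ (1 / (d : ℝ))))
        ≤ K * m / (((Nbar : ℝ) / m) ^ (1 / (d : ℝ))) := by
  refine ⟨√T, sqrt_pos.mpr hT, fun m Nbar hm hmN => ?_⟩
  have hm₀ : (0 : ℝ) < m := by exact_mod_cast hm
  have hαp : (d : ℝ) / (2 * (d + 1)) * (1 / d) ≤ 1 / 2 := by
    rcases Nat.eq_zero_or_pos d with rfl | hd
    · norm_num
    · have : (0 : ℝ) < d := by exact_mod_cast hd
      rw [div_mul_div_comm, mul_one, mul_comm, ← div_div, div_self this.ne']
      gcongr
      linarith
  simpa using sum_sqrt_div_ceil_rpow_le (Icc 1 m) (t := fun k => (k : ℝ) * T / m)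
    (fun k hk => by have := (mem_Icc.mp hk).1; positivity)
    (fun k hk => by
      rw [div_le_iff₀ hm₀, mul_comm]; gcongr; exact_mod_cast (mem_Icc.mp hk).2)
    (by positivity) (by positivity) hαp (by exact_mod_cast hm.trans hmN)

theorem grid_size_optimization (d : ℕ) (hd : 1 ≤ d) (T : ℝ) (hT : 0 < T) :
    ∃ K : ℝ, 0 < K ∧ ∀ m Nbar : ℕ, 1 ≤ m → m ≤ Nbar →
      (∑ k ∈ Finset.Icc 1 m,
          Real.sqrt ((k : ℝ) * T / m) /
            ((Nat.ceil ((((k : ℝ) * T / m) ^ ((d : ℝ) / (2 * (d + 1))) * (Nbar : ℝ)) /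
              (∑ j ∈ Finset.Icc 1 m, ((j : ℝ) * T / m) ^ ((d : ℝ) / (2 * (d + 1))))) : ℝ)
              ^ (1 / (d : ℝ))))
        ≤ K * m / (((Nbar : ℝ) / m) ^ (1 / (d : ℝ))) :=
  grid_size_optimization_general d T hT
end
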